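/- Let (A,φ) be a PCA over Set. Then Asm(A,φ) is locally cartesian closed: for every morphism of assemblies g: I → J, the pullback functor g*: Asm(A,φ)/J → Asm(A,φ)/I between slice categories has a right adjoint. -/

import Mathlib

open CategoryTheory

namespace PcaPaper

/-- A partial binary application on `A`. -/
abbrev PApp (A : Type) := A → A → Option A

variable {A B C : Type}

/-- Definedness of the application of inhabited subsets. -/
def SubDef (app : PApp A) (U V : Set A) : Prop :=
  ∀ a ∈ U, ∀ b ∈ V, (app a b).isSome

/-- Application of subsets. -/
def SubApp (app : PApp A) (U V : Set A) : Set A :=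
  {c | ∃ a ∈ U, ∃ b ∈ V, app a b = some c}

/-- Terms with `n` variables, built from variables by application. -/
inductive Term (n : ℕ) : Type
  | var : Fin n → Term n
  | op : Term n → Term n → Term n

/-- Evaluation of a term at a vector of elements, as a partial function. -/
def Term.eval (app : PApp A) : {n : ℕ} → Term n → (Fin n → A) → Option A
  | _, .var i, ρ => some (ρ i)
  | _, .op s t, ρ => (Term.eval app s ρ).bind fun x => (Term.eval app t ρ).bind fun y => app x y

/-- Evaluation of a term at a vector of subsets. -/
def Term.subEval (app : PApp A) : {n : ℕ} → Term n → (Fin n → Set A) → Set A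
  | _, .var i, ρ => ρ i
  | _, .op s t, ρ => SubApp app (Term.subEval app s ρ) (Term.subEval app t ρ)

/-- Definedness of the evaluation of a term at a vector of subsets. -/
def Term.subDef (app : PApp A) : {n : ℕ} → Term n → (Fin n → Set A) → Prop
  | _, .var _, _ => True
  | _, .op s t, ρ => Term.subDef app s ρ ∧ Term.subDef app t ρ ∧
      SubDef app (Term.subEval app s ρ) (Term.subEval app t ρ)

/-- `r · a 0 · … · a (k-1)`, associated to the left. -/
def appVec (app : PApp A) (r : A) : (k : ℕ) → (Fin k → A) → Option A
  | 0, _ => some r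
  | k + 1, a => (appVec app r k fun i => a i.castSucc).bind fun s => app s (a (Fin.last k))

/-- `U` realizes `λ x₀ … xₙ. t`. -/
def Realizes (app : PApp A) (U : Set A) {n : ℕ} (t : Term (n + 1)) : Prop :=
  ∀ r ∈ U, ∀ a : Fin (n + 1) → A,
    (appVec app r n fun i => a i.castSucc).isSome ∧
    ∀ b, Term.eval app t a = some b → appVec app r (n + 1) a = some b

/-- A filter of inhabited subsets on a partial applicative structure. -/
structure IsPcaFilter (app : PApp A) (φ : Set (Set A)) : Prop where
  nonempty : ∀ U ∈ φ, U.Nonempty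
  upward : ∀ U ∈ φ, ∀ V : Set A, U ⊆ V → V ∈ φ
  appClosed : ∀ U ∈ φ, ∀ V ∈ φ, SubDef app U V → SubApp app U V ∈ φ

/-- Combinatorial completeness of a set of subsets. -/
def CombComplete (app : PApp A) (G : Set (Set A)) : Prop :=
  ∀ (n : ℕ) (t : Term (n + 1)), ∃ U ∈ G, Realizes app U t

/-- The least filter containing `G`. -/
def genFilter (app : PApp A) (G : Set (Set A)) : Set (Set A) :=
  ⋂₀ {ψ | IsPcaFilter app ψ ∧ G ⊆ ψ}

/-- A (relative) PCA over the base category `Set`: a nonempty set with a partial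
binary application and a combinatorially complete filter of inhabited subsets. -/
structure PCA (A : Type) where
  app : PApp A
  nonemptyCarrier : Nonempty A
  filt : Set (Set A)
  isFilter : IsPcaFilter app filt
  complete : CombComplete app filt

/- ### Helper lemmas -/

lemma isSome_bind_left {α β : Type} {o : Option α} {f : α → Option β}
    (h : (o.bind f).isSome) : o.isSome := by
  cases o <;> simp_all

lemma appVec_two_pre (app : PApp A) (r u v x : A) :
    (appVec app r 2 fun i => (![u, v, x] : Fin 3 → A) i.castSucc)
      = (app r u).bind fun s => app s v := rfl

lemma appVec_three_cons (app : PApp A) (r u v x : A) :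
    appVec app r (2 + 1) ![u, v, x]
      = ((app r u).bind fun s => app s v).bind fun s => app s x := rfl

lemma eval_comp_term (app : PApp A) (u v x : A) :
    Term.eval app (Term.op (.var 1) (.op (.var 0) (.var 2))) ![u, v, x]
      = (app u x).bind fun y => app v y := by
  simp [Term.eval]

lemma eval_app2_term (app : PApp A) (u v x : A) :
    Term.eval app (Term.op (.op (.var 0) (.var 1)) (.var 2)) ![u, v, x]
      = (app u v).bind fun d => app d x := by
  simp [Term.eval]

lemma filt_nonempty (P : PCA A) : ∃ U, U ∈ P.filt := by
  obtain ⟨U, hU, -⟩ := P.complete 0 (.var 0)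
  exact ⟨U, hU⟩

lemma univ_mem_filt (P : PCA A) : (Set.univ : Set A) ∈ P.filt := by
  obtain ⟨U, hU⟩ := filt_nonempty P
  exact P.isFilter.upward U hU _ (Set.subset_univ U)

lemma exists_ireal (P : PCA A) :
    ∃ U ∈ P.filt, ∀ r ∈ U, ∀ a : A, P.app r a = some a := by
  obtain ⟨U, hU, hreal⟩ := P.complete 0 (.var 0)
  refine ⟨U, hU, fun r hr a => ?_⟩
  have h := (hreal r hr fun _ => a).2 a (by simp [Term.eval])
  simpa [appVec] using h

lemma realizes3_chain (P : PCA A) {T : Set A} {t : Term (2 + 1)}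
    (hreal : Realizes P.app T t) {r : A} (hr : r ∈ T) (u v : A) :
    ∃ s w, P.app r u = some s ∧ P.app s v = some w := by
  have h1 : ((P.app r u).bind fun s => P.app s v).isSome := by
    have h := (hreal r hr ![u, v, v]).1
    rwa [appVec_two_pre] at h
  cases hru : P.app r u with
  | none => rw [hru] at h1; simp at h1
  | some s =>
    rw [hru] at h1
    simp only [Option.bind_some] at h1
    obtain ⟨w, hw⟩ := Option.isSome_iff_exists.mp h1
    exact ⟨s, w, rfl, hw⟩

lemma exists_tracker3 (P : PCA A) (t : Term (2 + 1)) {U V : Set A}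
    (hU : U ∈ P.filt) (hV : V ∈ P.filt) :
    ∃ W ∈ P.filt, ∀ w ∈ W, ∃ u ∈ U, ∃ v ∈ V,
      ∀ x c : A, Term.eval P.app t ![u, v, x] = some c → P.app w x = some c := by
  obtain ⟨T, hT, hreal⟩ := P.complete 2 t
  have hdef1 : SubDef P.app T U := by
    intro r hr u _
    obtain ⟨s, w, hs, -⟩ := realizes3_chain P hreal hr u u
    simp [hs]
  have hTU := P.isFilter.appClosed T hT U hU hdef1
  have hdef2 : SubDef P.app (SubApp P.app T U) V := by
    rintro s ⟨r, hr, u, hu, hru⟩ v _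
    obtain ⟨s', w, hs', hw⟩ := realizes3_chain P hreal hr u v
    rw [hru] at hs'
    injection hs' with h
    subst h
    simp [hw]
  refine ⟨SubApp P.app (SubApp P.app T U) V,
    P.isFilter.appClosed _ hTU V hV hdef2, ?_⟩
  rintro w ⟨s, ⟨r, hr, u, hu, hru⟩, v, hv, hsv⟩
  refine ⟨u, hu, v, hv, fun x c hc => ?_⟩
  have h2 : appVec P.app r (2 + 1) ![u, v, x] = some c := (hreal r hr ![u, v, x]).2 c hc
  rw [appVec_three_cons, hru] at h2
  simp only [Option.bind_some] at h2
  rw [hsv] at h2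
  simpa using h2

/- ### Assemblies -/

/-- An assembly over a PCA `(A, φ)`. -/
structure Asm {A : Type} (P : PCA A) : Type 1 where
  carrier : Type
  E : carrier → A → Prop
  total : ∀ x, ∃ a, E x a

/-- `U` tracks the function `f` between (the carriers of) two assemblies. -/
def Tracks (P : PCA A) {X Y : Asm P} (U : Set A) (f : X.carrier → Y.carrier) : Prop :=
  ∀ x a r, X.E x a → r ∈ U → ∃ b, P.app r a = some b ∧ Y.E (f x) b

/-- The category of assemblies over a PCA. -/
instance asmCategory (P : PCA A) : Category (Asm P) where
  Hom X Y := {f : X.carrier → Y.carrier // ∃ U ∈ P.filt, Tracks P U f}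
  id X := ⟨fun x => x, by
    obtain ⟨U, hU, hI⟩ := exists_ireal P
    exact ⟨U, hU, fun x a r hx hr => ⟨a, hI r hr a, hx⟩⟩⟩
  comp {X Y Z} f g := ⟨fun x => g.1 (f.1 x), by
    obtain ⟨U, hU, hf⟩ := f.2
    obtain ⟨V, hV, hg⟩ := g.2
    obtain ⟨W, hW, hkey⟩ := exists_tracker3 P
      (Term.op (.var 1) (.op (.var 0) (.var 2))) hU hV
    refine ⟨W, hW, fun x a w hx hw => ?_⟩
    obtain ⟨u, hu, v, hv, key⟩ := hkey w hw
    obtain ⟨b, hb, hYb⟩ := hf x a u hx hu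
    obtain ⟨c, hc, hZc⟩ := hg (f.1 x) b v hYb hv
    refine ⟨c, key a c ?_, hZc⟩
    rw [eval_comp_term, hb]
    simpa using hc⟩
  id_comp f := Subtype.ext rfl
  comp_id f := Subtype.ext rfl
  assoc f g h := Subtype.ext rfl

/-- The global-sections-like functor `Γ : Asm(A,φ) ⥤ Set`. -/
def Gam (P : PCA A) : Asm P ⥤ Type where
  obj X := X.carrier
  map f := TypeCat.ofHom f.1
  map_id _ := rfl
  map_comp _ _ := rfl

/-- The constant-object assembly `∇ Y`. -/
def nablaObj (P : PCA A) (Y : Type) : Asm P where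
  carrier := Y
  E := fun _ _ => True
  total := fun _ => P.nonemptyCarrier.elim fun a => ⟨a, trivial⟩

/-- The functor `∇ : Set ⥤ Asm(A,φ)`. -/
def Nab (P : PCA A) : Type ⥤ Asm P where
  obj Y := nablaObj P Y
  map {Y Z} f := ⟨f, by
    obtain ⟨U, hU, hI⟩ := exists_ireal P
    exact ⟨U, hU, fun y a r _ hr => ⟨a, hI r hr a, trivial⟩⟩⟩
  map_id _ := Subtype.ext rfl
  map_comp _ _ := Subtype.ext rfl

/- ### Applicative morphisms -/

/-- The image of a subset under a relation. -/
def relImage (f : A → B → Prop) (V : Set A) : Set B :=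
  {b | ∃ a ∈ V, f a b}

/-- `U` tracks the relation `f` as an applicative (pre)morphism. -/
def Tracks₂ (appA : PApp A) (appB : PApp B) (U : Set B) (f : A → B → Prop) : Prop :=
  ∀ a a' c, appA a a' = some c → ∀ b b', f a b → f a' b' → ∀ r ∈ U,
    ∃ d e, appB r b = some d ∧ appB d b' = some e ∧ f c e

/-- `f ⊆ A × B` is an applicative morphism `(A,φ) → (B,ψ)`. -/
structure IsAppMor (appA : PApp A) (φ : Set (Set A)) (appB : PApp B) (ψ : Set (Set B))
    (f : A → B → Prop) : Prop where
  total : ∀ a, ∃ b, f a b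
  tracked : ∃ U ∈ ψ, Tracks₂ appA appB U f
  image : ∀ V ∈ φ, relImage f V ∈ ψ

/-- The preorder `f ≤ f'` on relations `A × B`, relative to `(B,ψ)`. -/
def RelLe (appB : PApp B) (ψ : Set (Set B)) (f f' : A → B → Prop) : Prop :=
  ∃ U ∈ ψ, ∀ a b, f a b → ∀ r ∈ U, ∃ c, appB r b = some c ∧ f' a c

/-- Relational composition: `(RelComp g f) a c ↔ ∃ b, f a b ∧ g b c`. -/
def RelComp (g : B → C → Prop) (f : A → B → Prop) : A → C → Prop :=
  fun a c => ∃ b, f a b ∧ g b c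

/-- The diagonal (identity) relation `δ_A`. -/
def relId (A : Type) : A → A → Prop := fun a b => a = b

/- ### The functor Asm(f) induced by an applicative morphism -/

/-- The action of an applicative morphism on an assembly. -/
def asmObj (P : PCA A) (Q : PCA B) (f : A → B → Prop) (htot : ∀ a, ∃ b, f a b)
    (X : Asm P) : Asm Q where
  carrier := X.carrier
  E := fun x b => ∃ a, X.E x a ∧ f a b
  total := fun x => by
    obtain ⟨a, ha⟩ := X.total x
    obtain ⟨b, hb⟩ := htot a
    exact ⟨b, a, ha, hb⟩

lemma tracks_asmMap {P : PCA A} {Q : PCA B} {f : A → B → Prop}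
    (hf : IsAppMor P.app P.filt Q.app Q.filt f) {X Y : Asm P}
    (g : X.carrier → Y.carrier) (hg : ∃ U ∈ P.filt, Tracks P U g) :
    ∃ W ∈ Q.filt,
      Tracks Q (X := asmObj P Q f hf.total X) (Y := asmObj P Q f hf.total Y) W g := by
  obtain ⟨U, hU, hgU⟩ := hg
  obtain ⟨T, hT, hfT⟩ := hf.tracked
  have hfU : relImage f U ∈ Q.filt := hf.image U hU
  obtain ⟨W, hW, hkey⟩ := exists_tracker3 Q
    (Term.op (.op (.var 0) (.var 1)) (.var 2)) hT hfU
  refine ⟨W, hW, ?_⟩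
  rintro x b w ⟨a, hxa, hab⟩ hw
  obtain ⟨v, hv, y, hy, key⟩ := hkey w hw
  obtain ⟨u, hu, huy⟩ := hy
  obtain ⟨a', ha', hEa'⟩ := hgU x a u hxa hu
  obtain ⟨d, e, hd, he, hfe⟩ := hfT u a a' ha' y b huy hab v hv
  refine ⟨e, key b e ?_, a', hEa', hfe⟩
  rw [eval_app2_term, hd]
  simpa using he

/-- The functor `Asm(f) : Asm(A,φ) ⥤ Asm(B,ψ)` induced by an applicative morphism. -/
def asmFunctor {P : PCA A} {Q : PCA B} {f : A → B → Prop}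
    (hf : IsAppMor P.app P.filt Q.app Q.filt f) : Asm P ⥤ Asm Q where
  obj X := asmObj P Q f hf.total X
  map {X Y} g := ⟨g.1, tracks_asmMap hf g.1 g.2⟩
  map_id _ := Subtype.ext rfl
  map_comp _ _ := Subtype.ext rfl
/- ### Products of PASs -/

/-- Coordinatewise partial application on `A × B`. -/
def prodApp (appA : PApp A) (appB : PApp B) : PApp (A × B) := fun p q =>
  (appA p.1 q.1).bind fun x => (appB p.2 q.2).bind fun y => some (x, y)

/-- The set `φ × ψ` of rectangles `U ×ˢ V` with `U ∈ φ` and `V ∈ ψ`. -/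
def prodFiltSet (φ : Set (Set A)) (ψ : Set (Set B)) : Set (Set (A × B)) :=
  {W | ∃ U ∈ φ, ∃ V ∈ ψ, W = U ×ˢ V}

/-- The filter `⟨φ × ψ⟩` of the pseudocoproduct of two PCAs. -/
def prodFilt (P : PCA A) (Q : PCA B) : Set (Set (A × B)) :=
  genFilter (prodApp P.app Q.app) (prodFiltSet P.filt Q.filt)

/- ### Quasi-surjectivity and computational density -/

/-- A quasi-surjective applicative morphism. -/
def QuasiSurjective (P : PCA A) (Q : PCA B) (f : A → B → Prop) : Prop :=
  ∃ N ∈ Q.filt, ∀ U ∈ Q.filt, ∃ V ∈ P.filt,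
    ∀ n ∈ N, ∀ b ∈ relImage f V, ∃ c, Q.app n b = some c ∧ c ∈ U

/-- A computationally dense applicative morphism. -/
def CompDense (P : PCA A) (Q : PCA B) (f : A → B → Prop) : Prop :=
  ∃ M ∈ Q.filt, ∀ U ∈ Q.filt, ∃ V ∈ P.filt,
    (∀ r ∈ V, ∀ a : A, (P.app r a).isSome) ∧
    (∀ r ∈ V, ∀ a a', P.app r a = some a' →
      (∀ u ∈ U, ∀ b, f a b → (Q.app u b).isSome) →
      ∀ m ∈ M, ∀ b', f a' b' →
        ∃ c, Q.app m b' = some c ∧ ∃ u ∈ U, ∃ b'', f a b'' ∧ Q.app u b'' = some c)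

/- ### Slicing: fiberwise filters over an assembly -/

/-- Fiberwise definedness of the application of two subsets of `I × A`. -/
def fibSubDef (app : PApp A) {I : Type} (U V : Set (I × A)) : Prop :=
  ∀ i r s, (i, r) ∈ U → (i, s) ∈ V → (app r s).isSome

/-- Fiberwise application of two subsets of `I × A`. -/
def fibSubApp (app : PApp A) {I : Type} (U V : Set (I × A)) : Set (I × A) :=
  {p | ∃ r s, (p.1, r) ∈ U ∧ (p.1, s) ∈ V ∧ app r s = some p.2}

/-- A fiberwise filter over `I`. -/
structure IsFibFilter (app : PApp A) (I : Type) (Ψ : Set (Set (I × A))) : Prop where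
  inhab : ∀ U ∈ Ψ, ∀ i : I, ∃ a, (i, a) ∈ U
  upward : ∀ U ∈ Ψ, ∀ V : Set (I × A), U ⊆ V → V ∈ Ψ
  appClosed : ∀ U ∈ Ψ, ∀ V ∈ Ψ, fibSubDef app U V → fibSubApp app U V ∈ Ψ

/-- The filter `φ_I` of the slice PCA over an assembly `I`: the least fiberwise filter
containing `E_I` and all sets `|I| × V` for `V ∈ φ`. -/
def sliceFilt (P : PCA A) (I : Asm P) : Set (Set (I.carrier × A)) :=
  ⋂₀ {Ψ | IsFibFilter P.app I.carrier Ψ ∧ {p : I.carrier × A | I.E p.1 p.2} ∈ Ψ ∧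
      ∀ V ∈ P.filt, {p : I.carrier × A | p.2 ∈ V} ∈ Ψ}

lemma sliceFilt_upward {P : PCA A} {I : Asm P} {U V : Set (I.carrier × A)}
    (hU : U ∈ sliceFilt P I) (hUV : U ⊆ V) : V ∈ sliceFilt P I := by
  rw [sliceFilt, Set.mem_sInter] at hU ⊢
  intro Ψ hΨ
  exact hΨ.1.upward U (hU Ψ hΨ) V hUV

lemma sliceFilt_appClosed {P : PCA A} {I : Asm P} {U V : Set (I.carrier × A)}
    (hU : U ∈ sliceFilt P I) (hV : V ∈ sliceFilt P I) (hdef : fibSubDef P.app U V) :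
    fibSubApp P.app U V ∈ sliceFilt P I := by
  rw [sliceFilt, Set.mem_sInter] at hU hV ⊢
  intro Ψ hΨ
  exact hΨ.1.appClosed U (hU Ψ hΨ) V (hV Ψ hΨ) hdef

lemma base_mem_sliceFilt {P : PCA A} {I : Asm P} {V : Set A} (hV : V ∈ P.filt) :
    {p : I.carrier × A | p.2 ∈ V} ∈ sliceFilt P I := by
  rw [sliceFilt, Set.mem_sInter]
  intro Ψ hΨ
  exact hΨ.2.2 V hV

lemma EI_mem_sliceFilt (P : PCA A) (I : Asm P) :
    {p : I.carrier × A | I.E p.1 p.2} ∈ sliceFilt P I := by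
  rw [sliceFilt, Set.mem_sInter]
  intro Ψ hΨ
  exact hΨ.2.1

lemma exists_fib_tracker3 (P : PCA A) (I : Asm P) (t : Term (2 + 1))
    {U V : Set (I.carrier × A)} (hU : U ∈ sliceFilt P I) (hV : V ∈ sliceFilt P I) :
    ∃ W ∈ sliceFilt P I, ∀ i w, (i, w) ∈ W → ∃ u v, (i, u) ∈ U ∧ (i, v) ∈ V ∧
      ∀ x c : A, Term.eval P.app t ![u, v, x] = some c → P.app w x = some c := by
  obtain ⟨T, hT, hreal⟩ := P.complete 2 t
  have hT' : {p : I.carrier × A | p.2 ∈ T} ∈ sliceFilt P I := base_mem_sliceFilt hT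
  have hdef1 : fibSubDef P.app {p : I.carrier × A | p.2 ∈ T} U := by
    intro i r s hr _
    obtain ⟨s', w', h1, -⟩ := realizes3_chain P hreal hr s s
    simp [h1]
  have h1mem := sliceFilt_appClosed hT' hU hdef1
  have hdef2 : fibSubDef P.app (fibSubApp P.app {p : I.carrier × A | p.2 ∈ T} U) V := by
    rintro i s v ⟨r, u, hr, hu, hru⟩ _
    obtain ⟨s', w', hs', hw'⟩ := realizes3_chain P hreal hr u v
    rw [hru] at hs'
    injection hs' with h
    subst h
    simp [hw']
  refine ⟨_, sliceFilt_appClosed h1mem hV hdef2, ?_⟩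
  rintro i w ⟨s, v, ⟨r, u, hr, hu, hru⟩, hv, hsv⟩
  refine ⟨u, v, hu, hv, fun x c hc => ?_⟩
  have h2 : appVec P.app r (2 + 1) ![u, v, x] = some c := (hreal r hr ![u, v, x]).2 c hc
  rw [appVec_three_cons, hru] at h2
  simp only [Option.bind_some] at h2
  rw [hsv] at h2
  simpa using h2

/- ### The category of assemblies over the slice PCA `(A,φ)/I` -/

/-- Assemblies over the slice PCA `(A,φ)/I`. -/
structure SliceAsm (P : PCA A) (I : Asm P) : Type 1 where
  carrier : Type
  k : carrier → I.carrier
  E : carrier → A → Prop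
  total : ∀ x, ∃ a, E x a

/-- Fiberwise tracking for morphisms of assemblies over `(A,φ)/I`. -/
def SliceTracks (P : PCA A) (I : Asm P) {X Y : SliceAsm P I} (U : Set (I.carrier × A))
    (f : X.carrier → Y.carrier) : Prop :=
  ∀ x a r, X.E x a → (X.k x, r) ∈ U → ∃ b, P.app r a = some b ∧ Y.E (f x) b

instance sliceAsmCategory (P : PCA A) (I : Asm P) : Category (SliceAsm P I) where
  Hom X Y := {f : X.carrier → Y.carrier //
    (∀ x, Y.k (f x) = X.k x) ∧ ∃ U ∈ sliceFilt P I, SliceTracks P I U f}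
  id X := ⟨fun x => x, fun _ => rfl, by
    obtain ⟨U, hU, hI⟩ := exists_ireal P
    exact ⟨{p | p.2 ∈ U}, base_mem_sliceFilt hU,
      fun x a r hx hr => ⟨a, hI r hr a, hx⟩⟩⟩
  comp {X Y Z} f g := ⟨fun x => g.1 (f.1 x), fun x => (g.2.1 (f.1 x)).trans (f.2.1 x), by
    obtain ⟨U, hU, hf⟩ := f.2.2
    obtain ⟨V, hV, hg⟩ := g.2.2
    obtain ⟨W, hW, hkey⟩ := exists_fib_tracker3 P I
      (Term.op (.var 1) (.op (.var 0) (.var 2))) hU hV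
    refine ⟨W, hW, fun x a w hx hw => ?_⟩
    obtain ⟨u, v, hu, hv, key⟩ := hkey (X.k x) w hw
    obtain ⟨b, hb, hYb⟩ := hf x a u hx hu
    have hv' : (Y.k (f.1 x), v) ∈ V := by rw [f.2.1 x]; exact hv
    obtain ⟨c, hc, hZc⟩ := hg (f.1 x) b v hYb hv'
    refine ⟨c, key a c ?_, hZc⟩
    rw [eval_comp_term, hb]
    simpa using hc⟩
  id_comp f := Subtype.ext rfl
  comp_id f := Subtype.ext rfl
  assoc f g h := Subtype.ext rfl

/- ### Families of assemblies (products of PCAs) -/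

/-- The category of families of assemblies over a family of PCAs, with uniformly
tracked families of morphisms; this is the category of assemblies over the product
PCA of the family, taken over the product of the base categories. -/
structure FamAsm {I : Type} {A : I → Type} (P : ∀ i, PCA (A i)) : Type 1 where
  obj : ∀ i, Asm (P i)

instance famAsmCategory {I : Type} {A : I → Type} (P : ∀ i, PCA (A i)) :
    Category (FamAsm P) where
  Hom X Y := {f : ∀ i, (X.obj i).carrier → (Y.obj i).carrier //
    ∃ U : ∀ i, Set (A i), (∀ i, U i ∈ (P i).filt) ∧ ∀ i, Tracks (P i) (U i) (f i)}
  id X := ⟨fun i x => x, by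
    choose U hU using fun i => exists_ireal (P i)
    exact ⟨U, fun i => (hU i).1, fun i x a r hx hr => ⟨a, (hU i).2 r hr a, hx⟩⟩⟩
  comp {X Y Z} f g := ⟨fun i x => g.1 i (f.1 i x), by
    obtain ⟨U, hU, hf⟩ := f.2
    obtain ⟨V, hV, hg⟩ := g.2
    choose W hW using fun i => exists_tracker3 (P i)
      (Term.op (.var 1) (.op (.var 0) (.var 2))) (hU i) (hV i)
    refine ⟨W, fun i => (hW i).1, fun i x a w hx hw => ?_⟩
    obtain ⟨u, hu, v, hv, key⟩ := (hW i).2 w hw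
    obtain ⟨b, hb, hYb⟩ := hf i x a u hx hu
    obtain ⟨c, hc, hZc⟩ := hg i (f.1 i x) b v hYb hv
    refine ⟨c, key a c ?_, hZc⟩
    rw [eval_comp_term, hb]
    simpa using hc⟩
  id_comp f := Subtype.ext rfl
  comp_id f := Subtype.ext rfl
  assoc f g h := Subtype.ext rfl


/-! Pullbacks of assemblies are computed on carriers, a point being realized by the codes of
pairs of realizers of its components. For `g : I ⟶ J` and `X` over `I`, a point of `Π_g X` over
`j : J` is a section of `X` over the fibre `g⁻¹(j)` admitting one realizer `e` that sends every
realizer of `i` to a realizer of the value at `i`; it is realized by the codes of `⟨a, e⟩` with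
`a` realizing `j`. The transpose of `k : g^* Y ⟶ X` sends `y` to the section `i ↦ k (y, i)`,
realized by `λb. u ⟨a, b⟩` for `u` tracking `k` and `a` realizing `y`, and together with
evaluation this makes `Π_g X` a terminal object among the arrows `g^* Y ⟶ X`. The filter is
not a set of elements, so every tracker is obtained by applying a realizer of the relevant
λ-term to the filter sets of the trackers it is built from, using closure under application. -/

open Limits

abbrev app2 (app : PApp A) (r a b : A) : Option A :=
  (app r a).bind fun s => app s b

section Combinators

variable {P : PCA A} {U V : Set A} {r : A}

lemma Realizes.app2_eq {t : Term 2} (h : Realizes P.app U t) (hr : r ∈ U) {a b w : A}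
    (ht : t.eval P.app ![a, b] = some w) : app2 P.app r a b = some w :=
  (h r hr ![a, b]).2 w ht

lemma Realizes.app2_isSome {t : Term 3} (h : Realizes P.app U t) (hr : r ∈ U) (a b : A) :
    (app2 P.app r a b).isSome :=
  (h r hr ![a, b, b]).1

lemma Realizes.app3_eq {t : Term 3} (h : Realizes P.app U t) (hr : r ∈ U) {a b c w : A}
    (ht : t.eval P.app ![a, b, c] = some w) :
    (app2 P.app r a b).bind (fun s => P.app s c) = some w :=
  (h r hr ![a, b, c]).2 w ht

lemma exists_comp_tracker (hU : U ∈ P.filt) (hV : V ∈ P.filt) :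
    ∃ W ∈ P.filt, ∀ w ∈ W, ∃ u ∈ U, ∃ v ∈ V, ∀ x y z : A,
      P.app v x = some y → P.app u y = some z → P.app w x = some z := by
  obtain ⟨W, hW, h⟩ := exists_tracker3 P (.op (.var 0) (.op (.var 1) (.var 2))) hU hV
  refine ⟨W, hW, fun w hw => ?_⟩
  obtain ⟨u, hu, v, hv, key⟩ := h w hw
  exact ⟨u, hu, v, hv, fun x y z hy hz => key x z (by simp [Term.eval, hy, hz])⟩

lemma exists_s_tracker (hU : U ∈ P.filt) (hV : V ∈ P.filt) :
    ∃ W ∈ P.filt, ∀ w ∈ W, ∃ u ∈ U, ∃ v ∈ V, ∀ x y z r : A,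
      P.app u x = some y → P.app v x = some z → P.app y z = some r → P.app w x = some r := by
  obtain ⟨W, hW, h⟩ := exists_tracker3 P
    (.op (.op (.var 0) (.var 2)) (.op (.var 1) (.var 2))) hU hV
  refine ⟨W, hW, fun w hw => ?_⟩
  obtain ⟨u, hu, v, hv, key⟩ := h w hw
  exact ⟨u, hu, v, hv, fun x y z r hy hz hr => key x r (by simp [Term.eval, hy, hz, hr])⟩

lemma exists_postcomp_tracker (hU : U ∈ P.filt) :
    ∃ W ∈ P.filt, ∀ w ∈ W, ∃ u ∈ U, ∀ q : A, ∃ e, P.app w q = some e ∧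
      ∀ b y z : A, P.app q b = some y → P.app u y = some z → P.app e b = some z := by
  obtain ⟨T, hT, hreal⟩ := P.complete 2 (.op (.var 0) (.op (.var 1) (.var 2)))
  have hdef : SubDef P.app T U := fun t ht u _ =>
    isSome_bind_left (hreal.app2_isSome ht u u)
  refine ⟨SubApp P.app T U, P.isFilter.appClosed T hT U hU hdef, ?_⟩
  rintro w ⟨t, ht, u, hu, htu⟩
  refine ⟨u, hu, fun q => ?_⟩
  obtain ⟨e, he⟩ := Option.isSome_iff_exists.mp (hreal.app2_isSome ht u q)
  rw [app2, htu, Option.bind_some] at he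
  refine ⟨e, he, fun b y z hy hz => ?_⟩
  have h := hreal.app3_eq ht (a := u) (b := q) (c := b) (w := z) (by simp [Term.eval, hy, hz])
  rwa [app2, htu, Option.bind_some, he, Option.bind_some] at h

end Combinators

structure Pairing (P : PCA A) where
  pair : Set A
  fst : Set A
  snd : Set A
  pair_mem : pair ∈ P.filt
  fst_mem : fst ∈ P.filt
  snd_mem : snd ∈ P.filt
  pair_isSome : ∀ p ∈ pair, ∀ a b : A, (app2 P.app p a b).isSome
  fst_app : ∀ f ∈ fst, ∀ p ∈ pair, ∀ a b c : A,
    app2 P.app p a b = some c → P.app f c = some a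
  snd_app : ∀ f ∈ snd, ∀ p ∈ pair, ∀ a b c : A,
    app2 P.app p a b = some c → P.app f c = some b

/-- The encoding `⟨a, b⟩ = λz. z a b`, with projections `c ↦ c k` for `k = λx y. x`
and `k = λx y. y`. -/
lemma nonempty_pairing (P : PCA A) : Nonempty (Pairing P) := by
  obtain ⟨Pr, hPr, hpair⟩ := P.complete 2 (.op (.op (.var 2) (.var 0)) (.var 1))
  have unpair : ∀ p ∈ Pr, ∀ a b c z w : A, app2 P.app p a b = some c →
      app2 P.app z a b = some w → P.app c z = some w := by
    intro p hp a b c z w hc hw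
    have h := hpair.app3_eq hp (c := z) (by simpa [Term.eval] using hw)
    rwa [hc, Option.bind_some] at h
  have projection : ∀ n : Fin 2, ∃ F ∈ P.filt, ∀ f ∈ F, ∀ p ∈ Pr, ∀ a b c : A,
      app2 P.app p a b = some c → P.app f c = some (![a, b] n) := by
    intro n
    obtain ⟨K, hK, hk⟩ := P.complete 1 (.var n)
    obtain ⟨F, hF, h⟩ := exists_tracker3 P (.op (.var 2) (.var 0)) hK hK
    refine ⟨F, hF, fun f hf p hp a b c hc => ?_⟩
    obtain ⟨u, hu, _, _, key⟩ := h f hf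
    refine key c _ ?_
    simpa [Term.eval] using unpair p hp a b c u _ hc (hk.app2_eq hu (by simp [Term.eval]))
  obtain ⟨F, hF, hfst⟩ := projection 0
  obtain ⟨S, hS, hsnd⟩ := projection 1
  exact ⟨⟨Pr, F, S, hPr, hF, hS, fun p hp a b => hpair.app2_isSome hp a b, hfst, hsnd⟩⟩

namespace Pairing

variable {P : PCA A} (D : Pairing P)

def Codes (a b c : A) : Prop :=
  ∃ p ∈ D.pair, app2 P.app p a b = some c

lemma exists_codes (a b : A) : ∃ c, D.Codes a b c := by
  obtain ⟨p, hp⟩ := P.isFilter.nonempty D.pair D.pair_mem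
  obtain ⟨c, hc⟩ := Option.isSome_iff_exists.mp (D.pair_isSome p hp a b)
  exact ⟨c, p, hp, hc⟩

variable {D}

lemma fst_app_of_codes {f a b c : A} (hf : f ∈ D.fst) (h : D.Codes a b c) :
    P.app f c = some a :=
  let ⟨p, hp, hc⟩ := h
  D.fst_app f hf p hp a b c hc

lemma snd_app_of_codes {f a b c : A} (hf : f ∈ D.snd) (h : D.Codes a b c) :
    P.app f c = some b :=
  let ⟨p, hp, hc⟩ := h
  D.snd_app f hf p hp a b c hc

end Pairing

namespace Asm

section Pullback

variable {P : PCA A} {X Y Z W : Asm P}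

lemma hom_ext {f g : X ⟶ Y} (h : f.1 = g.1) : f = g :=
  Subtype.ext h

lemma congr_hom_apply {f g : X ⟶ Y} (h : f = g) (x : X.carrier) : f.1 x = g.1 x := by
  rw [h]

variable (D : Pairing P) (f : X ⟶ Z) (g : Y ⟶ Z)

def pullbackObj : Asm P where
  carrier := {xy : X.carrier × Y.carrier // f.1 xy.1 = g.1 xy.2}
  E s c := ∃ a b, X.E s.1.1 a ∧ Y.E s.1.2 b ∧ D.Codes a b c
  total s := by
    obtain ⟨a, ha⟩ := X.total s.1.1
    obtain ⟨b, hb⟩ := Y.total s.1.2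
    obtain ⟨c, hc⟩ := D.exists_codes a b
    exact ⟨c, a, b, ha, hb, hc⟩

def pullbackFst : pullbackObj D f g ⟶ X :=
  ⟨fun s => s.1.1, D.fst, D.fst_mem, fun _ _ _ ⟨a, _, ha, _, hc⟩ hr =>
    ⟨a, Pairing.fst_app_of_codes hr hc, ha⟩⟩

def pullbackSnd : pullbackObj D f g ⟶ Y :=
  ⟨fun s => s.1.2, D.snd, D.snd_mem, fun _ _ _ ⟨_, b, _, hb, hc⟩ hr =>
    ⟨b, Pairing.snd_app_of_codes hr hc, hb⟩⟩

lemma pullback_condition : pullbackFst D f g ≫ f = pullbackSnd D f g ≫ g :=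
  hom_ext (funext fun s => s.2)

variable {f g} in
def pullbackLift (h : W ⟶ X) (k : W ⟶ Y) (w : h ≫ f = k ≫ g) : W ⟶ pullbackObj D f g := by
  refine ⟨fun x => ⟨(h.1 x, k.1 x), congr_hom_apply w x⟩, ?_⟩
  obtain ⟨U, hU, hu⟩ := h.2
  obtain ⟨V, hV, hv⟩ := k.2
  -- `λx. ⟨u x, v x⟩`
  obtain ⟨W₁, hW₁, hw₁⟩ := exists_comp_tracker D.pair_mem hU
  obtain ⟨W₂, hW₂, hw₂⟩ := exists_s_tracker hW₁ hV
  refine ⟨W₂, hW₂, fun x d r hd hr => ?_⟩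
  obtain ⟨r₁, hr₁, v, hv', key₂⟩ := hw₂ r hr
  obtain ⟨p, hp, u, hu', key₁⟩ := hw₁ r₁ hr₁
  obtain ⟨a, hua, ha⟩ := hu x d u hd hu'
  obtain ⟨b, hvb, hb⟩ := hv x d v hd hv'
  obtain ⟨c, hc⟩ := Option.isSome_iff_exists.mp (D.pair_isSome p hp a b)
  obtain ⟨y, hy, hyc⟩ := Option.bind_eq_some_iff.mp hc
  exact ⟨c, key₂ d y b c (key₁ d a y hua hy) hvb hyc, a, b, ha, hb, p, hp, hc⟩

theorem isPullback : IsPullback (pullbackFst D f g) (pullbackSnd D f g) f g :=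
  IsPullback.of_isLimit (c := PullbackCone.mk _ _ (pullback_condition D f g))
    (PullbackCone.IsLimit.mk _ (fun s => pullbackLift D s.fst s.snd s.condition)
      (fun _ => rfl) (fun _ => rfl) fun _ _ h₁ h₂ => hom_ext <| funext fun x =>
        Subtype.ext (Prod.ext (congr_hom_apply h₁ x) (congr_hom_apply h₂ x)))

instance hasPullbacks : HasPullbacks (Asm P) := by
  obtain ⟨D⟩ := nonempty_pairing P
  have : ∀ {X Y Z : Asm P} {f : X ⟶ Z} {g : Y ⟶ Z}, HasPullback f g :=
    (isPullback D _ _).hasPullback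
  exact hasPullbacks_of_hasLimit_cospan (Asm P)

lemma isoPullback_inv_apply (x : (pullback f g).carrier) :
    ((isPullback D f g).isoPullback.inv.1 x).1 =
      ((pullback.fst f g).1 x, (pullback.snd f g).1 x) :=
  Prod.ext (congr_hom_apply (isPullback D f g).isoPullback_inv_fst x)
    (congr_hom_apply (isPullback D f g).isoPullback_inv_snd x)

end Pullback

section DependentProduct

variable {P : PCA A} (D : Pairing P) {I J : Asm P} (g : I ⟶ J) (X : Over I)

def RealizesSection (j : J.carrier) (s : ∀ i, g.1 i = j → X.left.carrier) (e : A) : Prop :=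
  ∀ i h b, I.E i b → ∃ d, P.app e b = some d ∧ X.left.E (s i h) d

/-- A point of `Π_g X`: a section of `X` over the fibre `g⁻¹(base)`, realized uniformly. -/
structure PiElem where
  base : J.carrier
  sec : ∀ i, g.1 i = base → X.left.carrier
  sec_over : ∀ i h, X.hom.1 (sec i h) = i
  realized : ∃ e, RealizesSection g X base sec e

namespace PiElem

variable {g X}

lemma ext' {σ τ : PiElem g X} (hb : σ.base = τ.base)
    (hs : ∀ i h h', σ.sec i h = τ.sec i h') : σ = τ := by
  cases σ; cases τ
  dsimp only at hb hs
  subst hb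
  congr
  exact funext fun i => funext fun h => hs i h h

lemma sec_congr {σ τ : PiElem g X} (hσ : σ = τ) {i i' : I.carrier} (hi : i = i')
    (h : g.1 i = σ.base) (h' : g.1 i' = τ.base) : σ.sec i h = τ.sec i' h' := by
  subst hσ hi
  rfl

end PiElem

def piObj : Over J :=
  Over.mk (Y := ⟨PiElem g X,
    fun σ c => ∃ a e, J.E σ.base a ∧ RealizesSection g X σ.base σ.sec e ∧ D.Codes a e c,
    fun σ => by
      obtain ⟨a, ha⟩ := J.total σ.base
      obtain ⟨e, he⟩ := σ.realized
      obtain ⟨c, hc⟩ := D.exists_codes a e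
      exact ⟨c, a, e, ha, he, hc⟩⟩)
    ⟨PiElem.base, D.fst, D.fst_mem, fun _ _ _ ⟨a, _, ha, _, hc⟩ hr =>
      ⟨a, Pairing.fst_app_of_codes hr hc, ha⟩⟩

def piEv : pullbackObj D (piObj D g X).hom g ⟶ X.left := by
  refine ⟨fun s => s.1.1.sec s.1.2 s.2.symm, ?_⟩
  -- `(σ, i)` is realized by `⟨⟨a, e⟩, b⟩` and `e b` realizes its image: `λc. π₂ (π₁ c) (π₂ c)`
  obtain ⟨W₁, hW₁, hw₁⟩ := exists_comp_tracker D.snd_mem D.fst_mem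
  obtain ⟨W, hW, hw⟩ := exists_s_tracker hW₁ D.snd_mem
  refine ⟨W, hW, fun s c r hc hr => ?_⟩
  obtain ⟨cσ, b, ⟨a, e, -, he, hcσ⟩, hb, hc⟩ := hc
  obtain ⟨r₁, hr₁, sn, hsn, key⟩ := hw r hr
  obtain ⟨sn', hsn', fs, hfs, key₁⟩ := hw₁ r₁ hr₁
  obtain ⟨d, hd, hXd⟩ := he s.1.2 s.2.symm b hb
  refine ⟨d, key c e b d ?_ (Pairing.snd_app_of_codes hsn hc) hd, hXd⟩
  exact key₁ c cσ e (Pairing.fst_app_of_codes hfs hc) (Pairing.snd_app_of_codes hsn' hcσ)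

lemma piEv_comp_hom : piEv D g X ≫ X.hom = pullbackSnd D (piObj D g X).hom g :=
  hom_ext (funext fun s => s.1.1.sec_over _ _)

section Lift

variable {Y : Over J} (k : pullbackObj D Y.hom g ⟶ X.left)

lemma exists_section_tracker : ∃ W ∈ P.filt, ∀ w ∈ W, ∀ y a, Y.left.E y a →
    ∃ e, P.app w a = some e ∧
      RealizesSection g X (Y.hom.1 y) (fun i h => k.1 ⟨(y, i), h.symm⟩) e := by
  obtain ⟨U, hU, hu⟩ := k.2
  -- `λa b. u ⟨a, b⟩`
  obtain ⟨T, hT, ht⟩ := exists_postcomp_tracker hU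
  obtain ⟨W, hW, hw⟩ := exists_comp_tracker hT D.pair_mem
  refine ⟨W, hW, fun w hw' y a ha => ?_⟩
  obtain ⟨t, ht', p, hp, key⟩ := hw w hw'
  obtain ⟨u, hu', hq⟩ := ht t ht'
  obtain ⟨q, hpq⟩ := Option.isSome_iff_exists.mp (isSome_bind_left (D.pair_isSome p hp a a))
  obtain ⟨e, hte, he⟩ := hq q
  refine ⟨e, key a q e hpq hte, fun i h b hb => ?_⟩
  obtain ⟨c, hc⟩ := Option.isSome_iff_exists.mp (D.pair_isSome p hp a b)
  have hqc : P.app q b = some c := by rwa [app2, hpq, Option.bind_some] at hc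
  obtain ⟨d, hd, hXd⟩ := hu ⟨(y, i), h.symm⟩ c u ⟨a, b, ha, hb, p, hp, hc⟩ hu'
  exact ⟨d, he b c d hqc hd, hXd⟩

variable {k} in
def piLift (hk : k ≫ X.hom = pullbackSnd D Y.hom g) : Y ⟶ piObj D g X := by
  refine Over.homMk ⟨fun y => ⟨Y.hom.1 y, fun i h => k.1 ⟨(y, i), h.symm⟩,
    fun i h => congr_hom_apply hk _, ?_⟩, ?_⟩ (hom_ext rfl)
  · obtain ⟨W, hW, hw⟩ := exists_section_tracker D g X k
    obtain ⟨w, hw'⟩ := P.isFilter.nonempty W hW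
    obtain ⟨a, ha⟩ := Y.left.total y
    obtain ⟨e, -, he⟩ := hw w hw' y a ha
    exact ⟨e, he⟩
  · -- `λa. ⟨v a, λb. u ⟨a, b⟩⟩`
    obtain ⟨V, hV, hv⟩ := Y.hom.2
    obtain ⟨W₁, hW₁, hw₁⟩ := exists_comp_tracker D.pair_mem hV
    obtain ⟨W₂, hW₂, hw₂⟩ := exists_section_tracker D g X k
    obtain ⟨W, hW, hw⟩ := exists_s_tracker hW₁ hW₂
    refine ⟨W, hW, fun y a r ha hr => ?_⟩
    obtain ⟨r₁, hr₁, r₂, hr₂, key⟩ := hw r hr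
    obtain ⟨p, hp, v, hv', key₁⟩ := hw₁ r₁ hr₁
    obtain ⟨a', hva, ha'⟩ := hv y a v ha hv'
    obtain ⟨e, hre, he⟩ := hw₂ r₂ hr₂ y a ha
    obtain ⟨c, hc⟩ := Option.isSome_iff_exists.mp (D.pair_isSome p hp a' e)
    obtain ⟨z, hz, hzc⟩ := Option.bind_eq_some_iff.mp hc
    exact ⟨c, key a z e c (key₁ a a' z hva hz) hre hzc, a', e, ha', he, p, hp, hc⟩

end Lift

lemma piObj_base_apply {Y : Over J} (l : Y ⟶ piObj D g X) (y : Y.left.carrier) :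
    (l.left.1 y).base = Y.hom.1 y :=
  congr_hom_apply (Over.w l) y

noncomputable def piCounit : (Over.pullback g).obj (piObj D g X) ⟶ X :=
  Over.homMk ((isPullback D _ g).isoPullback.inv ≫ piEv D g X) (by simp [piEv_comp_hom])

variable {D g X}

lemma pullback_map_comp_piCounit_apply {Y : Over J} (l : Y ⟶ piObj D g X)
    (s : (pullbackObj D Y.hom g).carrier) :
    ((Over.pullback g).map l ≫ piCounit D g X).left.1 ((isPullback D _ g).isoPullback.hom.1 s) =
      (l.left.1 s.1.1).sec s.1.2 ((piObj_base_apply D g X l _).trans s.2).symm := by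
  have hfst : (isPullback D Y.hom g).isoPullback.hom ≫ ((Over.pullback g).map l).left ≫
      pullback.fst _ g = pullbackFst D Y.hom g ≫ l.left := by
    have h : ((Over.pullback g).map l).left ≫ pullback.fst _ g = pullback.fst _ _ ≫ l.left :=
      pullback.lift_fst _ _ _
    rw [h, IsPullback.isoPullback_hom_fst_assoc]
  have hsnd : (isPullback D Y.hom g).isoPullback.hom ≫ ((Over.pullback g).map l).left ≫
      pullback.snd _ g = pullbackSnd D Y.hom g := by
    have h : ((Over.pullback g).map l).left ≫ pullback.snd _ g = pullback.snd _ _ :=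
      pullback.lift_snd _ _ _
    rw [h, IsPullback.isoPullback_hom_snd]
  have hpt := isoPullback_inv_apply D (piObj D g X).hom g
    (((Over.pullback g).map l).left.1 ((isPullback D _ g).isoPullback.hom.1 s))
  exact PiElem.sec_congr (congrArg Prod.fst hpt |>.trans (congr_hom_apply hfst s))
    (congrArg Prod.snd hpt |>.trans (congr_hom_apply hsnd s)) _ _

noncomputable def piTranspose {Y : Over J} (k : (Over.pullback g).obj Y ⟶ X) :
    Y ⟶ piObj D g X :=
  piLift D g X (k := (isPullback D _ g).isoPullback.hom ≫ k.left) (by simp)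

lemma pullback_map_piTranspose_comp_piCounit {Y : Over J} (k : (Over.pullback g).obj Y ⟶ X) :
    (Over.pullback g).map (piTranspose k) ≫ piCounit D g X = k := by
  refine Over.OverMorphism.ext ((cancel_epi (isPullback D Y.hom g).isoPullback.hom).1 ?_)
  exact hom_ext (funext fun s => pullback_map_comp_piCounit_apply _ s)

lemma eq_piTranspose {Y : Over J} (l : Y ⟶ piObj D g X) :
    l = piTranspose ((Over.pullback g).map l ≫ piCounit D g X) := by
  refine Over.OverMorphism.ext (hom_ext (funext fun y => PiElem.ext' (piObj_base_apply D g X l y)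
    fun i h h' => ?_))
  exact (pullback_map_comp_piCounit_apply l ⟨(y, i), h'.symm⟩).symm

variable (D g X)

noncomputable def isTerminalPiCounit : IsTerminal (CostructuredArrow.mk (piCounit D g X)) :=
  IsTerminal.ofUniqueHom
    (fun k => CostructuredArrow.homMk (piTranspose k.hom)
      (pullback_map_piTranspose_comp_piCounit _))
    fun _ m => CostructuredArrow.hom_ext _ _ <|
      (eq_piTranspose m.left).trans (congrArg piTranspose (CostructuredArrow.w m))

end DependentProduct

end Asm

/-- `Asm(A,φ)` is locally cartesian closed: it has pullbacks, and for
every morphism of assemblies `g : I → J` the pullback functor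
`g* : Asm(A,φ)/J ⥤ Asm(A,φ)/I` has a right adjoint. -/
theorem statement19 (A : Type) (P : PCA A) :
    ∃ hpb : Limits.HasPullbacks (Asm P),
      ∀ (I J : Asm P) (g : I ⟶ J),
        ∃ R : Over I ⥤ Over J,
          Nonempty (@Over.pullback (Asm P) _ I J g (fun _ => by haveI := hpb; infer_instance) ⊣ R) := by
  obtain ⟨D⟩ := nonempty_pairing P
  refine ⟨Asm.hasPullbacks, fun I J g => ?_⟩
  have : (Over.pullback g).IsLeftAdjoint := isLeftAdjoint_iff_hasTerminal_costructuredArrow.2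
    fun X => (Asm.isTerminalPiCounit D g X).hasTerminal
  exact ⟨_, ⟨Adjunction.ofIsLeftAdjoint _⟩⟩

end PcaPaper
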